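/- Let p be a prime, t ≥ 1 an integer, and q = p^t. For m ∈ ℤ/qℤ define the Ramanujan sum c_q(m) = ∑_{a ∈ (ℤ/qℤ)ˣ} exp(2πi·ā·m̄/q), where ā, m̄ ∈ {0,…,q−1} are the integer representatives, and for n ∈ ℤ define C_q(n) = |SL₂(ℤ/qℤ)|⁻¹ · ∑_{ω ∈ SL₂(ℤ/qℤ)} c_q(ω₂₂ − n), where ω₂₂ is the bottom-right entry of ω. Then: (i) if t = 1 and p divides n, C_q(n) = −1/(p+1); (ii) if t = 1 and p does not divide n, C_q(n) = 1/(p²−1); (iii) if t ≥ 2, C_q(n) = 0. -/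

import Mathlib

open scoped BigOperators

/-- The Ramanujan sum `c_q(m) = ∑_{a ∈ (ℤ/qℤ)ˣ} exp(2πi·ā·m̄/q)`, where `ā, m̄`
are the integer representatives in `{0,…,q−1}`. -/
noncomputable def ramanujanSum (q : ℕ) (m : ZMod q) : ℂ :=
  ∑ᶠ a : (ZMod q)ˣ,
    Complex.exp (2 * Real.pi * Complex.I *
      ((((a : ZMod q).val : ℂ) * ((m.val : ℕ) : ℂ)) / (q : ℂ)))

/-- The average `C_q(n) = |SL₂(ℤ/qℤ)|⁻¹ ∑_{ω ∈ SL₂(ℤ/qℤ)} c_q(ω₂₂ − n)`. -/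
noncomputable def ramanujanAvg (q : ℕ) (n : ℤ) : ℂ :=
  (Nat.card (Matrix.SpecialLinearGroup (Fin 2) (ZMod q)) : ℂ)⁻¹ *
    ∑ᶠ ω : Matrix.SpecialLinearGroup (Fin 2) (ZMod q),
      ramanujanSum q (((ω : Matrix (Fin 2) (Fin 2) (ZMod q)) 1 1) - (n : ZMod q))

/-!
Sort `SL₂(ℤ/qℤ)` by the entry `ω₂₂ = d`. Since `ℤ/p^tℤ` is a local ring, the fibre over `d` has
`q²` elements when `d` is a unit, and `q·φ(q)` otherwise (then `ω₁₂` is forced to be a unit).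
Hence the total is `q φ(q) ∑_d c_q(d - n) + q (q - φ(q)) ∑_{d unit} c_q(d - n)`. The first sum
vanishes by orthogonality of the primitive character `x ↦ exp(2πi x/q)`, and the second factors
as `c_q(1) c_q(-n)`. Finally `c_q(1) = -1` for `t = 1`, while for `t ≥ 2` it vanishes because the
units are stable under translation by the nonzero nilpotent `p^(t-1)`.
-/

open Finset
open scoped MatrixGroups

theorem sum_units_eq_sum_filter_isUnit {M N : Type*} [Monoid M] [Fintype M] [Fintype Mˣ]
    [DecidablePred (IsUnit : M → Prop)] [AddCommMonoid N] (f : M → N) :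
    ∑ u : Mˣ, f u = ∑ x with IsUnit x, f x := by
  refine sum_nbij Units.val (fun u _ => mem_filter.2 ⟨mem_univ _, u.isUnit⟩)
    Units.val_injective.injOn (fun x hx => ?_) fun _ _ => rfl
  obtain ⟨u, rfl⟩ := (mem_filter.1 hx).2
  exact ⟨u, mem_univ _, rfl⟩

section CharacterSums

variable {R R' : Type*} [CommRing R] [Fintype R] [DecidableEq R] [CommRing R'] (ψ : AddChar R R')

def unitsCharSum (m : R) : R' := ∑ a : Rˣ, ψ (a * m)

theorem unitsCharSum_units_mul (u : Rˣ) (m : R) :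
    unitsCharSum ψ (u * m) = unitsCharSum ψ m := by
  unfold unitsCharSum
  exact Fintype.sum_equiv (Equiv.mulRight u) _ _ fun a => by
    rw [Equiv.coe_mulRight, Units.val_mul, mul_assoc]

theorem unitsCharSum_of_isUnit {m : R} (hm : IsUnit m) : unitsCharSum ψ m = unitsCharSum ψ 1 := by
  obtain ⟨u, rfl⟩ := hm
  simpa using unitsCharSum_units_mul ψ u 1

theorem unitsCharSum_zero : unitsCharSum ψ 0 = Fintype.card Rˣ := by
  simp [unitsCharSum]

theorem sum_units_unitsCharSum_sub (n : R) :
    ∑ u : Rˣ, unitsCharSum ψ (u - n) = unitsCharSum ψ 1 * unitsCharSum ψ (-n) := by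
  have hsplit (u : Rˣ) : unitsCharSum ψ (u - n) = ∑ a : Rˣ, ψ (u * a) * ψ (a * -n) := by
    refine sum_congr rfl fun a _ => ?_
    rw [← AddChar.map_add_eq_mul]
    congr 1
    ring
  simp_rw [hsplit]
  rw [sum_comm, unitsCharSum.eq_1 ψ (-n), mul_sum]
  refine sum_congr rfl fun a _ => ?_
  rw [← sum_mul, ← unitsCharSum_units_mul ψ a 1, mul_one]
  rfl

variable [IsDomain R']

theorem sum_unitsCharSum_sub [Nontrivial R] (hψ : ψ.IsPrimitive) (n : R) :
    ∑ d, unitsCharSum ψ (d - n) = 0 := by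
  rw [Fintype.sum_equiv (Equiv.subRight n) (fun d => unitsCharSum ψ (d - n)) (unitsCharSum ψ)
    fun _ => rfl]
  simp only [unitsCharSum]
  rw [sum_comm]
  refine sum_eq_zero fun a _ => ?_
  change ∑ x, ψ.mulShift a x = 0
  rw [AddChar.sum_eq_ite]
  exact if_neg (hψ a.ne_zero)

theorem sum_units_addChar_eq_neg_one {F : Type*} [Field F] [Fintype F] [DecidableEq F]
    {χ : AddChar F R'} (hχ : χ ≠ 1) : ∑ u : Fˣ, χ u = -1 := by
  classical
  have hsum : ∑ x, χ x = 0 := by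
    rw [AddChar.sum_eq_ite]
    exact if_neg hχ
  simp_rw [sum_units_eq_sum_filter_isUnit, isUnit_iff_ne_zero, filter_ne',
    sum_erase_eq_sub (mem_univ (0 : F)), hsum, AddChar.map_zero_eq_one, zero_sub]

theorem sum_units_addChar_eq_zero_of_isNilpotent {x : R} (hx : IsNilpotent x) (hψx : ψ x ≠ 1) :
    ∑ u : Rˣ, ψ u = 0 := by
  classical
  -- translation by `x` permutes the units, so `ψ x * S = S` for the sum `S`
  have hunit (y : R) : IsUnit (y + x) ↔ IsUnit y :=
    ⟨fun h => by simpa using hx.neg.isUnit_add_left_of_commute h (Commute.all _ _),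
      fun h => hx.isUnit_add_left_of_commute h (Commute.all _ _)⟩
  rw [sum_units_eq_sum_filter_isUnit, sum_filter]
  refine eq_zero_of_mul_eq_self_left hψx ?_
  rw [mul_sum]
  refine Fintype.sum_equiv (Equiv.addRight x) _ _ fun y => ?_
  simp only [Equiv.coe_addRight, hunit, AddChar.map_add_eq_mul, mul_ite, zero_mul, mul_comm]

end CharacterSums

namespace Matrix.SpecialLinearGroup

variable {R : Type*} [CommRing R]

theorem det_fin_two_eq_one (ω : SL(2, R)) : ω 0 0 * ω 1 1 - ω 0 1 * ω 1 0 = 1 :=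
  (det_fin_two _).symm.trans ω.det_coe

theorem isUnit_apply_zero_one [IsLocalRing R] (ω : SL(2, R)) (hω : ¬IsUnit (ω 1 1)) :
    IsUnit (ω 0 1) := by
  have hdet : ω 0 1 * ω 1 0 = -(1 - ω 0 0 * ω 1 1) := by
    linear_combination -det_fin_two_eq_one ω
  have hunit := (IsLocalRing.isUnit_one_sub_self_of_mem_nonunits _
    (mul_mem_nonunits_right (a := ω 0 0) hω)).neg
  exact isUnit_of_mul_isUnit_left (hdet ▸ hunit)

def fiberEquivOfUnit (u : Rˣ) : {ω : SL(2, R) // ω 1 1 = u} ≃ R × R where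
  toFun ω := (ω.1 0 1, ω.1 1 0)
  invFun bc := ⟨⟨!![↑u⁻¹ * (1 + bc.1 * bc.2), bc.1; bc.2, u], by
    rw [det_fin_two_of, mul_right_comm, Units.inv_mul, one_mul, add_sub_cancel_right]⟩, rfl⟩
  left_inv := by
    rintro ⟨ω, hω⟩
    have h00 : ↑u⁻¹ * (1 + ω 0 1 * ω 1 0) = ω 0 0 := by
      rw [show 1 + ω 0 1 * ω 1 0 = ω 0 0 * u by
          linear_combination -det_fin_two_eq_one ω + ω 0 0 * hω,
        mul_comm, Units.mul_inv_cancel_right]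
    refine Subtype.ext <| ext _ _ fun i j => ?_
    fin_cases i <;> fin_cases j <;> simp [h00, hω]
  right_inv _ := rfl

noncomputable def fiberEquivOfNotIsUnit [IsLocalRing R] {d : R} (hd : ¬IsUnit d) :
    {ω : SL(2, R) // ω 1 1 = d} ≃ R × Rˣ where
  toFun ω := (ω.1 0 0, (isUnit_apply_zero_one ω.1 (by rwa [ω.2])).unit)
  invFun av := ⟨⟨!![av.1, av.2; ↑av.2⁻¹ * (av.1 * d - 1), d], by
    rw [det_fin_two_of, ← mul_assoc, Units.mul_inv, one_mul, sub_sub_cancel]⟩, rfl⟩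
  left_inv := by
    rintro ⟨ω, hω⟩
    have h10 : ω 0 0 * d - 1 = ω 0 1 * ω 1 0 := by
      linear_combination det_fin_two_eq_one ω - ω 0 0 * hω
    refine Subtype.ext <| ext _ _ fun i j => ?_
    fin_cases i <;> fin_cases j <;> simp [h10, hω, ← mul_assoc]
  right_inv _ := Prod.ext rfl (Units.ext rfl)

theorem sum_comp_apply_one_one [Fintype R] [DecidableEq R] [IsLocalRing R] {M : Type*}
    [AddCommMonoid M] (f : R → M) :
    ∑ ω : SL(2, R), f (ω 1 1) = (Fintype.card R * Fintype.card Rˣ) • ∑ d, f d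
      + (Fintype.card R * (Fintype.card R - Fintype.card Rˣ)) • ∑ u : Rˣ, f u := by
  classical
  set q := Fintype.card R
  have hcard (d : R) : Fintype.card {ω : SL(2, R) // ω 1 1 = d}
      = q * Fintype.card Rˣ + if IsUnit d then q * (q - Fintype.card Rˣ) else 0 := by
    by_cases hd : IsUnit d
    · obtain ⟨u, rfl⟩ := hd
      have : Fintype.card Rˣ ≤ q := Fintype.card_le_of_injective _ Units.val_injective
      rw [Fintype.card_congr (fiberEquivOfUnit u), Fintype.card_prod, if_pos u.isUnit, ← mul_add,
        Nat.add_sub_cancel' this]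
    · rw [Fintype.card_congr (fiberEquivOfNotIsUnit hd), Fintype.card_prod, if_neg hd, add_zero]
  have hfiber (d : R) : ∑ ω : {ω : SL(2, R) // ω 1 1 = d}, f (ω.1 1 1)
      = Fintype.card {ω : SL(2, R) // ω 1 1 = d} • f d := by
    rw [Fintype.sum_congr _ _ fun ω => congrArg f ω.2, sum_const, card_univ]
  rw [← Fintype.sum_fiberwise (fun ω : SL(2, R) => ω 1 1)]
  simp_rw [hfiber, hcard, add_smul, sum_add_distrib, ite_smul, zero_smul, ← smul_sum,
    ← sum_filter, sum_units_eq_sum_filter_isUnit, smul_sum]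

theorem card_fin_two_of_isLocalRing [Fintype R] [DecidableEq R] [IsLocalRing R] :
    Fintype.card SL(2, R) = Fintype.card R * Fintype.card Rˣ * Fintype.card R
      + Fintype.card R * (Fintype.card R - Fintype.card Rˣ) * Fintype.card Rˣ := by
  simpa using sum_comp_apply_one_one (M := ℕ) fun _ => 1

end Matrix.SpecialLinearGroup

namespace ZMod

theorem isNilpotent_of_not_isUnit {p t : ℕ} (hp : p.Prime) (ht : t ≠ 0) {x : ZMod (p ^ t)}
    (hx : ¬IsUnit x) : IsNilpotent x := by
  have : NeZero (p ^ t) := ⟨pow_ne_zero t hp.ne_zero⟩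
  rw [← natCast_zmod_val x, isUnit_natCast_iff_not_dvd_pow hp (Nat.pos_of_ne_zero ht),
    not_not] at hx
  obtain ⟨k, hk⟩ := hx
  refine ⟨t, ?_⟩
  rw [← natCast_zmod_val x, hk, Nat.cast_mul, mul_pow, ← Nat.cast_pow, natCast_self, zero_mul]

theorem isLocalRing_prime_pow {p t : ℕ} (hp : p.Prime) (ht : t ≠ 0) :
    IsLocalRing (ZMod (p ^ t)) :=
  have : Nontrivial (ZMod (p ^ t)) :=
    nontrivial_iff.2 (Nat.pow_eq_one.not.2 (by simp [hp.ne_one, ht]))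
  IsLocalRing.of_isUnit_or_isUnit_one_sub_self fun x =>
    or_iff_not_imp_left.2 fun hx => (isNilpotent_of_not_isUnit hp ht hx).isUnit_one_sub

end ZMod

theorem ramanujanSum_eq_unitsCharSum (q : ℕ) [NeZero q] (m : ZMod q) :
    ramanujanSum q m = unitsCharSum ZMod.stdAddChar m := by
  rw [ramanujanSum, finsum_eq_sum_of_fintype]
  refine sum_congr rfl fun a _ => ?_
  have hval : (a * m : ZMod q) = ((a : ZMod q).val * m.val : ℕ) := by simp
  rw [hval, ZMod.stdAddChar_apply, ZMod.toCircle_natCast]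
  push_cast
  ring_nf

theorem ramanujanAvg_eq_of_isLocalRing (q : ℕ) [NeZero q] [IsLocalRing (ZMod q)] (n : ℤ) :
    ramanujanAvg q n = (q * (q - Fintype.card (ZMod q)ˣ) : ℕ)
      * (unitsCharSum ZMod.stdAddChar (1 : ZMod q) * unitsCharSum ZMod.stdAddChar (-n : ZMod q))
      / Nat.card SL(2, ZMod q) := by
  rw [ramanujanAvg, finsum_eq_sum_of_fintype, inv_mul_eq_div]
  simp_rw [ramanujanSum_eq_unitsCharSum]
  rw [Matrix.SpecialLinearGroup.sum_comp_apply_one_one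
      (fun d : ZMod q => unitsCharSum ZMod.stdAddChar (d - (n : ZMod q))),
    ZMod.card, sum_unitsCharSum_sub _ (ZMod.isPrimitive_stdAddChar q), sum_units_unitsCharSum_sub,
    smul_zero, zero_add, nsmul_eq_mul]

theorem unitsCharSum_stdAddChar_one_of_prime (p : ℕ) [Fact p.Prime] :
    unitsCharSum (ZMod.stdAddChar (N := p)) 1 = -1 := by
  simp only [unitsCharSum, mul_one]
  refine sum_units_addChar_eq_neg_one fun h => ZMod.isPrimitive_stdAddChar p one_ne_zero ?_
  rw [AddChar.mulShift_one, h]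

theorem unitsCharSum_stdAddChar_one_of_two_le (p : ℕ) [Fact p.Prime] {t : ℕ} (ht : 2 ≤ t) :
    unitsCharSum (ZMod.stdAddChar (N := p ^ t)) 1 = 0 := by
  have hp : p.Prime := Fact.out
  set x : ZMod (p ^ t) := ((p ^ (t - 1) : ℕ) : ZMod (p ^ t))
  have hx0 : x ≠ 0 := by
    rw [Ne, ZMod.natCast_eq_zero_iff, Nat.pow_dvd_pow_iff_le_right hp.one_lt]
    omega
  have hx : IsNilpotent x := ⟨2, by
    rw [← Nat.cast_pow, ← pow_mul, ZMod.natCast_eq_zero_iff]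
    exact Nat.pow_dvd_pow p (by omega)⟩
  simp only [unitsCharSum, mul_one]
  exact sum_units_addChar_eq_zero_of_isNilpotent _ hx
    (((ZMod.isPrimitive_stdAddChar _).zmod_char_eq_one_iff _ x).not.2 hx0)

theorem ramanujanAvg_prime (p : ℕ) [Fact p.Prime] (n : ℤ) :
    ramanujanAvg p n = -unitsCharSum ZMod.stdAddChar (-n : ZMod p) / ((p : ℂ) ^ 2 - 1) := by
  have hp : p.Prime := Fact.out
  rw [ramanujanAvg_eq_of_isLocalRing, unitsCharSum_stdAddChar_one_of_prime,
    Nat.card_eq_fintype_card, Matrix.SpecialLinearGroup.card_fin_two_of_isLocalRing, ZMod.card,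
    ZMod.card_units, Nat.sub_sub_self hp.one_le]
  have hp0 : (p : ℂ) ≠ 0 := Nat.cast_ne_zero.2 hp.ne_zero
  push_cast [Nat.cast_sub hp.one_le]
  rw [show (p : ℂ) * (p - 1) * p + p * 1 * (p - 1) = p * (p ^ 2 - 1) by ring, mul_one, neg_one_mul,
    mul_div_mul_left _ _ hp0]

theorem ramanujanAvg_prime_pow_of_two_le (p : ℕ) [Fact p.Prime] {t : ℕ} (ht : 2 ≤ t) (n : ℤ) :
    ramanujanAvg (p ^ t) n = 0 := by
  have := ZMod.isLocalRing_prime_pow (Fact.out : p.Prime) (by omega : t ≠ 0)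
  rw [ramanujanAvg_eq_of_isLocalRing, unitsCharSum_stdAddChar_one_of_two_le p ht, zero_mul, mul_zero, zero_div]

theorem ramanujanAvg_eval (p t : ℕ) (hp : p.Prime) (n : ℤ) :
    (t = 1 → (p : ℤ) ∣ n → ramanujanAvg (p ^ t) n = -1 / ((p : ℂ) + 1)) ∧
    (t = 1 → ¬ (p : ℤ) ∣ n → ramanujanAvg (p ^ t) n = 1 / ((p : ℂ) ^ 2 - 1)) ∧
    (2 ≤ t → ramanujanAvg (p ^ t) n = 0) := by
  have := Fact.mk hp
  refine ⟨fun ht hdvd => ?_, fun ht hndvd => ?_,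
    fun ht => ramanujanAvg_prime_pow_of_two_le p ht n⟩
  · have hn : (n : ZMod p) = 0 := (ZMod.intCast_zmod_eq_zero_iff_dvd n p).2 hdvd
    have hp1 : (p : ℂ) - 1 ≠ 0 := sub_ne_zero.2 (Nat.cast_ne_one.2 hp.ne_one)
    rw [ht, pow_one, ramanujanAvg_prime, hn, neg_zero, unitsCharSum_zero, ZMod.card_units,
      Nat.cast_sub hp.one_le, Nat.cast_one, show (p : ℂ) ^ 2 - 1 = (p - 1) * (p + 1) by ring,
      ← div_div, neg_div, div_self hp1, neg_div]
  · have hn : IsUnit (-(n : ZMod p)) := isUnit_iff_ne_zero.2 <|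
      neg_ne_zero.2 ((ZMod.intCast_zmod_eq_zero_iff_dvd n p).not.2 hndvd)
    rw [ht, pow_one, ramanujanAvg_prime, unitsCharSum_of_isUnit _ hn,
      unitsCharSum_stdAddChar_one_of_prime, neg_neg]
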